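/- Let Q be a finite subgroup of Houghton's group H_n and let 𝓜^Q = {α ∈ 𝓜 : q ∘ α = α for all q ∈ Q}. Then 𝓜^Q is nonempty, and any two elements of 𝓜^Q have a common upper bound in 𝓜^Q: for all α, β ∈ 𝓜^Q there exist γ ∈ 𝓜^Q and translations t, t′ with γ = α ∘ t = β ∘ t′. Hence the poset (𝓜^Q, ≤), where α ≤ β iff β = α ∘ t for some translation t, is directed (so its geometric realization is contractible). -/

import Mathlib

/-!
An element `q` of `H_n` of finite order `N` has `N • m = 0` for its translation vector `m`,
so `m = 0`: `q` is eventually the identity. As `Q` is finite, all of `Q` fixes every point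
beyond a common level `Z`, so the shift by `Z` lies in `𝓜^Q`. For the upper bound, any
`α ∈ 𝓜` agrees with a shift far out on each ray, so `α ∘ t` is the shift by a constant `c`
for a suitable translation `t` as soon as `c` is large. Taking `c` large for both `α` and
`β`, the shift `γ` by `c` is `α ∘ t = β ∘ t'`, and `q ∘ γ = (q ∘ α) ∘ t = γ` for `q ∈ Q`.
-/

/-- `f : ℕ × Fin n → ℕ × Fin n` is eventually a translation with translation
vector `m : Fin n → ℤ`: on each ray `ℕ × {x}`, for all sufficiently large `i`,
`f` sends `(i, x)` to `(i + m x, x)`. -/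
def EvTrans (n : ℕ) (f : ℕ × Fin n → ℕ × Fin n) (m : Fin n → ℤ) : Prop :=
  ∀ x : Fin n, ∃ z : ℕ, ∀ i : ℕ, z ≤ i →
    (f (i, x)).2 = x ∧ ((f (i, x)).1 : ℤ) = (i : ℤ) + m x

/-- Houghton's group `H_n`: the subgroup of the symmetric group on
`S = ℕ × Fin n` consisting of the permutations that are eventually
translations on each ray. -/
def Houghton (n : ℕ) : Subgroup (Equiv.Perm (ℕ × Fin n)) where
  carrier := {f : Equiv.Perm (ℕ × Fin n) | ∃ m : Fin n → ℤ, EvTrans n (⇑f) m}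
  one_mem' := ⟨0, fun x => ⟨0, fun i _ => by simp⟩⟩
  mul_mem' := by
    rintro a b ⟨ma, hA⟩ ⟨mb, hB⟩
    refine ⟨ma + mb, fun x => ?_⟩
    obtain ⟨za, hza⟩ := hA x
    obtain ⟨zb, hzb⟩ := hB x
    refine ⟨max zb ((za : ℤ) - mb x).toNat, fun i hi => ?_⟩
    have hib : zb ≤ i := le_trans (le_max_left _ _) hi
    obtain ⟨h2, h1⟩ := hzb i hib
    have hbx : (⇑b) (i, x) = ((b (i, x)).1, x) := Prod.ext_iff.mpr ⟨rfl, h2⟩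
    have hk : za ≤ (b (i, x)).1 := by
      have h3 : ((za : ℤ) - mb x) ≤ (i : ℤ) := by
        calc ((za : ℤ) - mb x) ≤ (((za : ℤ) - mb x).toNat : ℤ) := Int.self_le_toNat _
          _ ≤ (i : ℤ) := by exact_mod_cast le_trans (le_max_right _ _) hi
      have h4 : (za : ℤ) ≤ ((b (i, x)).1 : ℤ) := by rw [h1]; linarith
      exact_mod_cast h4
    obtain ⟨h4, h5⟩ := hza (b (i, x)).1 hk
    constructor
    · show ((a * b) (i, x)).2 = x
      rw [Equiv.Perm.mul_apply, hbx]
      exact h4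
    · show (((a * b) (i, x)).1 : ℤ) = (i : ℤ) + (ma + mb) x
      rw [Equiv.Perm.mul_apply, hbx, h5, h1, Pi.add_apply]
      ring
  inv_mem' := by
    rintro a ⟨m, hm⟩
    refine ⟨-m, fun x => ?_⟩
    obtain ⟨z, hz⟩ := hm x
    refine ⟨((z : ℤ) + m x).toNat, fun i hi => ?_⟩
    have h1 : (z : ℤ) + m x ≤ (i : ℤ) :=
      le_trans (Int.self_le_toNat _) (by exact_mod_cast hi)
    have h0 : (0 : ℤ) ≤ (i : ℤ) - m x := by
      have hz0 : (0 : ℤ) ≤ (z : ℤ) := Int.natCast_nonneg z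
      linarith
    set j := ((i : ℤ) - m x).toNat with hjdef
    have hj' : (j : ℤ) = (i : ℤ) - m x := Int.toNat_of_nonneg h0
    have hjz : z ≤ j := by
      have : (z : ℤ) ≤ (j : ℤ) := by rw [hj']; linarith
      exact_mod_cast this
    obtain ⟨h2, h3⟩ := hz j hjz
    have hfst : (a (j, x)).1 = i := by
      have : ((a (j, x)).1 : ℤ) = (i : ℤ) := by rw [h3, hj']; ring
      exact_mod_cast this
    have hfix : (⇑a) (j, x) = (i, x) := Prod.ext_iff.mpr ⟨hfst, h2⟩
    have hinv : (⇑a⁻¹) (i, x) = (j, x) := by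
      rw [← hfix]
      exact Equiv.symm_apply_apply a (j, x)
    constructor
    · rw [hinv]
    · rw [hinv]
      show (j : ℤ) = (i : ℤ) + (-m) x
      rw [hj', Pi.neg_apply]
      ring

/-- A translation of `S = ℕ × Fin n`: a map of the form
`(i, x) ↦ (i + k x, x)` with `k : Fin n → ℕ`. -/
def IsHTranslation (n : ℕ) (t : ℕ × Fin n → ℕ × Fin n) : Prop :=
  ∃ k : Fin n → ℕ, ∀ (i : ℕ) (x : Fin n), t (i, x) = (i + k x, x)

/-- The monoid `𝓜` of injective maps `S → S` that are eventually
translations. -/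
def HMonoid (n : ℕ) : Set ((ℕ × Fin n) → (ℕ × Fin n)) :=
  {α | Function.Injective α ∧ ∃ m : Fin n → ℤ, EvTrans n α m}

open Filter

def shift (n : ℕ) (k : Fin n → ℕ) (p : ℕ × Fin n) : ℕ × Fin n :=
  (p.1 + k p.2, p.2)

section Shift

variable {n : ℕ} {k : Fin n → ℕ}

lemma isHTranslation_shift : IsHTranslation n (shift n k) :=
  ⟨k, fun _ _ => rfl⟩

lemma shift_injective : Function.Injective (shift n k) := by
  rintro ⟨i, x⟩ ⟨j, y⟩ h
  simp only [shift, Prod.mk.injEq] at h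
  obtain ⟨h1, rfl⟩ := h
  simp only [Prod.mk.injEq, and_true]
  omega

lemma evTrans_shift : EvTrans n (shift n k) (fun x => k x) :=
  fun _ => ⟨0, fun _ _ => ⟨rfl, by simp [shift]⟩⟩

lemma shift_mem_hMonoid : shift n k ∈ HMonoid n :=
  ⟨shift_injective, _, evTrans_shift⟩

end Shift

lemma evTrans_id {n : ℕ} : EvTrans n id 0 :=
  fun _ => ⟨0, fun _ _ => by simp⟩

namespace EvTrans

variable {n : ℕ} {f g : ℕ × Fin n → ℕ × Fin n} {m m' : Fin n → ℤ}

lemma exists_uniform (h : EvTrans n f m) :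
    ∃ z, ∀ x i, z ≤ i → (f (i, x)).2 = x ∧ ((f (i, x)).1 : ℤ) = i + m x := by
  choose z hz using h
  exact ⟨Finset.univ.sup z, fun x i hi => hz x i ((Finset.le_sup (Finset.mem_univ x)).trans hi)⟩

lemma unique (h : EvTrans n f m) (h' : EvTrans n f m') : m = m' := by
  funext x
  obtain ⟨z, hz⟩ := h x
  obtain ⟨z', hz'⟩ := h' x
  have := (hz (max z z') (le_max_left _ _)).2
  have := (hz' (max z z') (le_max_right _ _)).2
  omega

lemma comp (hf : EvTrans n f m) (hg : EvTrans n g m') : EvTrans n (f ∘ g) (m + m') := by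
  intro x
  obtain ⟨zf, hzf⟩ := hf x
  obtain ⟨zg, hzg⟩ := hg x
  refine ⟨zg + zf + (-m' x).toNat, fun i hi => ?_⟩
  obtain ⟨hg2, hg1⟩ := hzg i (by omega)
  have hgi : g (i, x) = ((g (i, x)).1, x) := Prod.ext rfl hg2
  obtain ⟨hf2, hf1⟩ := hzf (g (i, x)).1 (by omega)
  simp only [Function.comp_apply, Pi.add_apply]
  rw [hgi]
  exact ⟨hf2, by omega⟩

lemma pow {q : Equiv.Perm (ℕ × Fin n)} (h : EvTrans n q m) (N : ℕ) :
    EvTrans n ⇑(q ^ N) (N • m) := by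
  induction N with
  | zero => simpa using evTrans_id
  | succ N ih => simpa only [pow_succ, Equiv.Perm.coe_mul, succ_nsmul] using ih.comp h

lemma eq_zero_of_pow_eq_one {q : Equiv.Perm (ℕ × Fin n)} (h : EvTrans n q m) {N : ℕ}
    (hN : N ≠ 0) (hq : q ^ N = 1) : m = 0 := by
  have hNm : N • m = 0 := by
    have := h.pow N
    rw [hq, Equiv.Perm.coe_one] at this
    exact this.unique evTrans_id
  exact (smul_eq_zero.mp hNm).resolve_left hN

lemma eventually_comp_shift_eq_shift (h : EvTrans n f m) :
    ∀ᶠ c in atTop, ∃ k, f ∘ shift n k = shift n (fun _ => c) := by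
  obtain ⟨z, hz⟩ := h.exists_uniform
  obtain ⟨M, hM⟩ := (Set.finite_range m).bddAbove
  filter_upwards [eventually_ge_atTop (z + M.toNat)] with c hc
  refine ⟨fun x => ((c : ℤ) - m x).toNat, funext fun ⟨i, x⟩ => ?_⟩
  have hmx : m x ≤ M := hM ⟨x, rfl⟩
  obtain ⟨h2, h1⟩ := hz x (i + ((c : ℤ) - m x).toNat) (by omega)
  refine Prod.ext ?_ h2
  simp only [Function.comp_apply, shift] at h1 ⊢
  omega

end EvTrans

lemma exists_fixed_beyond_of_isOfFinOrder {n : ℕ} {q : Equiv.Perm (ℕ × Fin n)}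
    (hq : q ∈ Houghton n) (hfin : IsOfFinOrder q) :
    ∃ z, ∀ x i, z ≤ i → q (i, x) = (i, x) := by
  obtain ⟨m, hm⟩ := hq
  obtain ⟨N, hN, hqN⟩ := isOfFinOrder_iff_pow_eq_one.mp hfin
  obtain rfl := hm.eq_zero_of_pow_eq_one hN.ne' hqN
  obtain ⟨z, hz⟩ := hm.exists_uniform
  exact ⟨z, fun x i hi => Prod.ext (by simpa using (hz x i hi).2) (hz x i hi).1⟩

lemma exists_fixed_beyond_of_finite {n : ℕ} {Q : Subgroup (Equiv.Perm (ℕ × Fin n))}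
    (hQ : Q ≤ Houghton n) [Finite Q] :
    ∃ Z, ∀ q ∈ Q, ∀ x i, Z ≤ i → q (i, x) = (i, x) := by
  choose z hz using fun q : Q =>
    exists_fixed_beyond_of_isOfFinOrder (hQ q.2)
      (Q.subtype.isOfFinOrder (isOfFinOrder_of_finite q))
  obtain ⟨Z, hZ⟩ := (Set.finite_range z).bddAbove
  exact ⟨Z, fun q hq x i hi => hz ⟨q, hq⟩ x i ((hZ ⟨⟨q, hq⟩, rfl⟩).trans hi)⟩

theorem houghton_monoid_fixed_points_directed_general (n : ℕ)
    (Q : Subgroup (Equiv.Perm (ℕ × Fin n))) (hQ : Q ≤ Houghton n)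
    (hfin : Finite Q) :
    (∃ α ∈ HMonoid n, ∀ q ∈ Q, ⇑q ∘ α = α) ∧
    ∀ α ∈ HMonoid n, (∀ q ∈ Q, ⇑q ∘ α = α) →
      ∀ β ∈ HMonoid n, (∀ q ∈ Q, ⇑q ∘ β = β) →
        ∃ γ ∈ HMonoid n, (∀ q ∈ Q, ⇑q ∘ γ = γ) ∧
          ∃ t t' : (ℕ × Fin n) → (ℕ × Fin n),
            IsHTranslation n t ∧ IsHTranslation n t' ∧
            γ = α ∘ t ∧ γ = β ∘ t' := by
  obtain ⟨Z, hZ⟩ := exists_fixed_beyond_of_finite hQ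
  refine ⟨⟨shift n fun _ => Z, shift_mem_hMonoid,
    fun q hq => funext fun p => hZ q hq p.2 _ (Nat.le_add_left _ _)⟩, ?_⟩
  rintro α ⟨-, mα, hα⟩ hαQ β ⟨-, mβ, hβ⟩ -
  obtain ⟨c, ⟨k, hk⟩, ⟨k', hk'⟩⟩ :=
    (hα.eventually_comp_shift_eq_shift.and hβ.eventually_comp_shift_eq_shift).exists
  refine ⟨shift n fun _ => c, shift_mem_hMonoid, fun q hq => ?_, shift n k, shift n k',
    isHTranslation_shift, isHTranslation_shift, hk.symm, hk'.symm⟩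
  rw [← hk, ← Function.comp_assoc, hαQ q hq]

/-- If `Q` is a finite subgroup of Houghton's group `H_n`,
then the fixed-point set `𝓜^Q = {α ∈ 𝓜 | q ∘ α = α for all q ∈ Q}` is
nonempty, and any two of its elements have a common upper bound in `𝓜^Q`:
for `α, β ∈ 𝓜^Q` there are `γ ∈ 𝓜^Q` and translations `t, t'` with
`γ = α ∘ t = β ∘ t'`.  Hence the poset `(𝓜^Q, ≤)` is directed (so its
geometric realization is contractible). -/
theorem houghton_monoid_fixed_points_directed (n : ℕ) (hn : 1 ≤ n)
    (Q : Subgroup (Equiv.Perm (ℕ × Fin n))) (hQ : Q ≤ Houghton n)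
    (hfin : Finite Q) :
    (∃ α ∈ HMonoid n, ∀ q ∈ Q, ⇑q ∘ α = α) ∧
    ∀ α ∈ HMonoid n, (∀ q ∈ Q, ⇑q ∘ α = α) →
      ∀ β ∈ HMonoid n, (∀ q ∈ Q, ⇑q ∘ β = β) →
        ∃ γ ∈ HMonoid n, (∀ q ∈ Q, ⇑q ∘ γ = γ) ∧
          ∃ t t' : (ℕ × Fin n) → (ℕ × Fin n),
            IsHTranslation n t ∧ IsHTranslation n t' ∧
            γ = α ∘ t ∧ γ = β ∘ t' :=
  houghton_monoid_fixed_points_directed_general n Q hQ hfin
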